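/- For any sequence of K trajectories of length H over a finite state-action space S × A, the number of episodes k ∈ [K] in which the stopping time η^k ≠ H+1 occurs is at most |S||A|·log₂(2H), where η^k = min{h ∈ [H] : n_h^k(s_h^k,a_h^k) > 2N^k(s_h^k,a_h^k)} (with η^k = H+1 if no such h exists). -/

import Mathlib

open Finset

variable {S A : Type*} [DecidableEq S] [DecidableEq A]

/-- `visitN H st ac k x y` is the number of times the state-action pair `(x,y)`
is visited during the first `k-1` episodes (each of length `H`). -/
def visitN (H : ℕ) (st : ℕ → ℕ → S) (ac : ℕ → ℕ → A) (k : ℕ) (x : S) (y : A) : ℕ :=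
  ((Finset.Icc 1 (k - 1) ×ˢ Finset.Icc 1 H).filter
    (fun p => st p.1 p.2 = x ∧ ac p.1 p.2 = y)).card

/-- `visitn H st ac k h x y` counts visits of `(x,y)` up to (and including)
step `h` of episode `k`. -/
def visitn (H : ℕ) (st : ℕ → ℕ → S) (ac : ℕ → ℕ → A) (k h : ℕ) (x : S) (y : A) : ℕ :=
  visitN H st ac k x y +
    ((Finset.Icc 1 h).filter (fun j => st k j = x ∧ ac k j = y)).card

/-- `eta H st ac k` is the first step `h ∈ [H]` of episode `k` at which
`n_h^k(s_h^k, a_h^k) > 2 N^k(s_h^k, a_h^k)`, and `H+1` if no such step exists. -/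
def eta (H : ℕ) (st : ℕ → ℕ → S) (ac : ℕ → ℕ → A) (k : ℕ) : ℕ :=
  let T := (Finset.Icc 1 H).filter
    (fun h => 2 * visitN H st ac k (st k h) (ac k h) <
      visitn H st ac k h (st k h) (ac k h))
  if hT : T.Nonempty then T.min' hT else H + 1

/-- Per-episode count of visits of `(x,y)` in episode `k`. -/
def epc (H : ℕ) (st : ℕ → ℕ → S) (ac : ℕ → ℕ → A) (k : ℕ) (x : S) (y : A) : ℕ :=
  ((Finset.Icc 1 H).filter (fun j => st k j = x ∧ ac k j = y)).card

lemma visitN_eq_sum (H : ℕ) (st : ℕ → ℕ → S) (ac : ℕ → ℕ → A) (k : ℕ) (x : S) (y : A) :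
    visitN H st ac k x y = ∑ i ∈ Finset.Icc 1 (k - 1), epc H st ac i x y := by
  unfold visitN epc
  rw [Finset.card_filter, Finset.sum_product]
  exact Finset.sum_congr rfl fun i _ => (Finset.card_filter _ _).symm

lemma visitN_mono (H : ℕ) (st : ℕ → ℕ → S) (ac : ℕ → ℕ → A) {k k' : ℕ} (h : k ≤ k')
    (x : S) (y : A) : visitN H st ac k x y ≤ visitN H st ac k' x y := by
  rw [visitN_eq_sum, visitN_eq_sum]
  exact Finset.sum_le_sum_of_subset (Finset.Icc_subset_Icc_right (by omega))

lemma visitN_succ (H : ℕ) (st : ℕ → ℕ → S) (ac : ℕ → ℕ → A) {k : ℕ} (hk : 1 ≤ k)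
    (x : S) (y : A) :
    visitN H st ac (k + 1) x y = visitN H st ac k x y + epc H st ac k x y := by
  rw [visitN_eq_sum, visitN_eq_sum]
  have h1 : k + 1 - 1 = (k - 1) + 1 := by omega
  have h2 : k - 1 + 1 = k := by omega
  rw [h1, Finset.sum_Icc_succ_top (by omega), h2]

lemma visitn_le_visitN_succ (H : ℕ) (st : ℕ → ℕ → S) (ac : ℕ → ℕ → A) {k h : ℕ}
    (hk : 1 ≤ k) (hh : h ≤ H) (x : S) (y : A) :
    visitn H st ac k h x y ≤ visitN H st ac (k + 1) x y := by
  rw [visitN_succ H st ac hk]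
  unfold visitn epc
  exact add_le_add_right (Finset.card_le_card
    (Finset.filter_subset_filter (fun j => st k j = x ∧ ac k j = y) (Finset.Icc_subset_Icc_right hh))) _

lemma visitn_le_add (H : ℕ) (st : ℕ → ℕ → S) (ac : ℕ → ℕ → A) (k h : ℕ) (x : S) (y : A) :
    visitn H st ac k h x y ≤ visitN H st ac k x y + h := by
  unfold visitn
  have := (Finset.card_filter_le (Finset.Icc 1 h) (fun j => st k j = x ∧ ac k j = y)).trans
    (le_of_eq (Nat.card_Icc 1 h))
  omega

lemma eta_spec (H : ℕ) (st : ℕ → ℕ → S) (ac : ℕ → ℕ → A) (k : ℕ)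
    (hne : eta H st ac k ≠ H + 1) :
    eta H st ac k ∈ Finset.Icc 1 H ∧
      2 * visitN H st ac k (st k (eta H st ac k)) (ac k (eta H st ac k)) <
        visitn H st ac k (eta H st ac k) (st k (eta H st ac k)) (ac k (eta H st ac k)) := by
  by_cases hT : ((Finset.Icc 1 H).filter
      (fun h => 2 * visitN H st ac k (st k h) (ac k h) <
        visitn H st ac k h (st k h) (ac k h))).Nonempty
  · have he : eta H st ac k = ((Finset.Icc 1 H).filter
        (fun h => 2 * visitN H st ac k (st k h) (ac k h) <
          visitn H st ac k h (st k h) (ac k h))).min' hT := by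
      simp only [eta, dif_pos hT]
    have := Finset.min'_mem _ hT
    rw [← he] at this
    simpa using this
  · exfalso
    apply hne
    simp only [eta, dif_neg hT]

lemma fiber_bound (H K : ℕ) (hH : 1 ≤ H) (st : ℕ → ℕ → S) (ac : ℕ → ℕ → A)
    (x : S) (y : A) :
    (((Finset.Icc 1 K).filter (fun k => eta H st ac k ≠ H + 1 ∧
        st k (eta H st ac k) = x ∧ ac k (eta H st ac k) = y)).card) ≤ Nat.log 2 H + 1 := by
  set T := (Finset.Icc 1 K).filter (fun k => eta H st ac k ≠ H + 1 ∧
      st k (eta H st ac k) = x ∧ ac k (eta H st ac k) = y) with hT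
  have hbasic : ∀ k ∈ T, 1 ≤ k ∧
      2 * visitN H st ac k x y < visitn H st ac k (eta H st ac k) x y ∧
      eta H st ac k ∈ Finset.Icc 1 H := by
    intro k hk
    simp only [hT, Finset.mem_filter, Finset.mem_Icc] at hk
    obtain ⟨⟨hk1, _⟩, hne, hs, ha⟩ := hk
    obtain ⟨hmem, hineq⟩ := eta_spec H st ac k hne
    rw [hs, ha] at hineq
    exact ⟨hk1, hineq, hmem⟩
  have hdouble : ∀ k ∈ T, ∀ k' ∈ T, k < k' →
      2 * (visitN H st ac k x y + 1) ≤ visitN H st ac k' x y + 1 := by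
    intro k hk k' hk' hlt
    obtain ⟨hk1, hineq, hmem⟩ := hbasic k hk
    simp only [Finset.mem_Icc] at hmem
    have h1 : visitn H st ac k (eta H st ac k) x y ≤ visitN H st ac (k + 1) x y :=
      visitn_le_visitN_succ H st ac hk1 hmem.2 x y
    have h2 : visitN H st ac (k + 1) x y ≤ visitN H st ac k' x y :=
      visitN_mono H st ac (by omega) x y
    omega
  have hub : ∀ k ∈ T, visitN H st ac k x y + 1 ≤ H := by
    intro k hk
    obtain ⟨_, hineq, hmem⟩ := hbasic k hk
    simp only [Finset.mem_Icc] at hmem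
    have := visitn_le_add H st ac k (eta H st ac k) x y
    omega
  have hloglt : ∀ k ∈ T, ∀ k' ∈ T, k < k' →
      Nat.log 2 (visitN H st ac k x y + 1) < Nat.log 2 (visitN H st ac k' x y + 1) := by
    intro k hk k' hk' hlt
    have hd := hdouble k hk k' hk' hlt
    calc Nat.log 2 (visitN H st ac k x y + 1) + 1
        = Nat.log 2 ((visitN H st ac k x y + 1) * 2) :=
          (Nat.log_mul_base one_lt_two (by omega)).symm
      _ ≤ Nat.log 2 (visitN H st ac k' x y + 1) := Nat.log_mono_right (by omega)
  calc T.card ≤ (Finset.range (Nat.log 2 H + 1)).card := by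
        apply Finset.card_le_card_of_injOn
          (fun k => Nat.log 2 (visitN H st ac k x y + 1))
        · intro k hk
          simp only [Finset.mem_coe, Finset.mem_range]
          have hm : Nat.log 2 (visitN H st ac k x y + 1) ≤ Nat.log 2 H :=
            Nat.log_mono_right (hub k hk)
          omega
        · intro a ha b hb hab
          rcases lt_trichotomy a b with h | h | h
          · exact absurd hab (Nat.ne_of_lt (hloglt a ha b hb h))
          · exact h
          · exact absurd hab.symm (Nat.ne_of_lt (hloglt b hb a ha h))
    _ = Nat.log 2 H + 1 := Finset.card_range _

/-- The number of episodes among the first `K` in which the stopping time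
`η^k ≠ H+1` occurs is at most `|S||A|·log₂(2H)`. -/
theorem stopping_count [Fintype S] [Fintype A]
    (H K : ℕ) (hH : 1 ≤ H) (st : ℕ → ℕ → S) (ac : ℕ → ℕ → A) :
    (((Finset.Icc 1 K).filter (fun k => eta H st ac k ≠ H + 1)).card : ℝ) ≤
      (Fintype.card S * Fintype.card A : ℝ) * Real.logb 2 (2 * H) := by
  classical
  set T0 := (Finset.Icc 1 K).filter (fun k => eta H st ac k ≠ H + 1) with hT0
  have hcard : T0.card ≤ Fintype.card S * Fintype.card A * (Nat.log 2 H + 1) := by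
    rw [Finset.card_eq_sum_card_fiberwise
      (f := fun k => (st k (eta H st ac k), ac k (eta H st ac k)))
      (t := (Finset.univ : Finset (S × A))) (fun k _ => Finset.mem_univ _)]
    calc ∑ p ∈ (Finset.univ : Finset (S × A)),
          (T0.filter fun k => (st k (eta H st ac k), ac k (eta H st ac k)) = p).card
        ≤ ∑ _p ∈ (Finset.univ : Finset (S × A)), (Nat.log 2 H + 1) := by
          apply Finset.sum_le_sum
          intro p _
          have heq : T0.filter (fun k => (st k (eta H st ac k), ac k (eta H st ac k)) = p)
              = (Finset.Icc 1 K).filter (fun k => eta H st ac k ≠ H + 1 ∧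
                  st k (eta H st ac k) = p.1 ∧ ac k (eta H st ac k) = p.2) := by
            rw [hT0, Finset.filter_filter]
            apply Finset.filter_congr
            intro k _
            simp [Prod.ext_iff, and_assoc]
          rw [heq]
          exact fiber_bound H K hH st ac p.1 p.2
      _ = Fintype.card S * Fintype.card A * (Nat.log 2 H + 1) := by
          rw [Finset.sum_const, smul_eq_mul, Finset.card_univ, Fintype.card_prod]
  have hHpos : (0 : ℝ) < H := by exact_mod_cast hH
  have hlog : ((Nat.log 2 H : ℝ) + 1) ≤ Real.logb 2 (2 * H) := by
    have h1 : ((2 : ℝ) ^ (Nat.log 2 H)) ≤ (H : ℝ) := by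
      exact_mod_cast Nat.pow_log_le_self 2 (by omega)
    have h2 : Real.logb 2 ((2 : ℝ) ^ (Nat.log 2 H)) ≤ Real.logb 2 H :=
      Real.logb_le_logb_of_le one_lt_two (by positivity) h1
    rw [Real.logb_pow, Real.logb_self_eq_one one_lt_two, mul_one] at h2
    have h3 : Real.logb 2 (2 * (H : ℝ)) = 1 + Real.logb 2 H := by
      rw [Real.logb_mul (by norm_num) (ne_of_gt hHpos),
        Real.logb_self_eq_one one_lt_two]
    rw [h3]
    linarith
  calc (T0.card : ℝ)
      ≤ (Fintype.card S * Fintype.card A : ℝ) * ((Nat.log 2 H : ℝ) + 1) := by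
        exact_mod_cast Nat.cast_le.mpr hcard
    _ ≤ (Fintype.card S * Fintype.card A : ℝ) * Real.logb 2 (2 * H) :=
        mul_le_mul_of_nonneg_left hlog (by positivity)
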